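/- Let B be a semisimple MV-algebra. For every semisimple DMV-algebra V and every homomorphism of MV-algebras f : B → U_δ(V) (where U_δ(V) is the MV-algebra reduct of V), there exists a unique homomorphism of DMV-algebras f̃ : [0,1]_ℚ ⊗ B → V such that f̃ ∘ ι_B = f, where ι_B : B → [0,1]_ℚ ⊗ B is the canonical embedding b ↦ 1 ⊗ b. -/

import Mathlib

/-- An MV-algebra: an abelian monoid `(A, ⊕, 0)` with an involution `*` satisfying
the Łukasiewicz axioms. -/
class MVAlgebra (A : Type) where
  oplus : A → A → A
  star : A → A
  zero : A
  oplus_assoc : ∀ x y z : A, oplus (oplus x y) z = oplus x (oplus y z)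
  oplus_comm : ∀ x y : A, oplus x y = oplus y x
  oplus_zero : ∀ x : A, oplus x zero = x
  star_star : ∀ x : A, star (star x) = x
  lukasiewicz : ∀ x y : A,
    oplus (star (oplus (star x) y)) y = oplus (star (oplus (star y) x)) x
  oplus_star_zero : ∀ x : A, oplus (star zero) x = star zero

namespace MVAlgebra

variable {A : Type} [MVAlgebra A]

/-- The top element `1 = 0*`. -/
def one : A := star zero

/-- The MV-product `x ⊙ y = (x* ⊕ y*)*`. -/
def odot (x y : A) : A := star (oplus (star x) (star y))

/-- `n`-fold ⊕-sum of an element. -/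
def nmul : ℕ → A → A
  | 0, _ => zero
  | n + 1, x => oplus (nmul n x) x

/-- The lattice join `x ∨ y = (x ⊙ y*) ⊕ y`. -/
def sup (x y : A) : A := oplus (odot x (star y)) y

/-- The lattice meet `x ∧ y = (x ⊕ y*) ⊙ y`. -/
def inf (x y : A) : A := odot (oplus x (star y)) y

/-- The MV-order: `x ≤ y` iff `x ⊙ y* = 0`. -/
def le (x y : A) : Prop := odot x (star y) = zero

end MVAlgebra

/-- The rational unit interval `[0,1] ∩ ℚ`. -/
def QI : Type := {q : ℚ // 0 ≤ q ∧ q ≤ 1}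

namespace QI

/-- Truncated addition on `[0,1] ∩ ℚ`. -/
def oplus (r s : QI) : QI :=
  ⟨min (r.1 + s.1) 1, le_min (add_nonneg r.2.1 s.2.1) zero_le_one, min_le_right _ _⟩

/-- Negation `r* = 1 - r` on `[0,1] ∩ ℚ`. -/
def star (r : QI) : QI :=
  ⟨1 - r.1, by constructor <;> [linarith [r.2.2]; linarith [r.2.1]]⟩

def zero : QI := ⟨0, le_refl 0, zero_le_one⟩

def one : QI := ⟨1, zero_le_one, le_refl 1⟩

/-- Ordinary multiplication of rationals, restricted to `[0,1] ∩ ℚ`. -/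
def mul (r s : QI) : QI :=
  ⟨r.1 * s.1, mul_nonneg r.2.1 s.2.1, by nlinarith [r.2.1, r.2.2, s.2.1, s.2.2]⟩

/-- The MV-product `r ⊙ s = (r* ⊕ s*)*` on `[0,1] ∩ ℚ`. -/
def odot (r s : QI) : QI := star (oplus (star r) (star s))

/-- Division by a natural number in `[0,1] ∩ ℚ`. -/
def div (r : QI) (n : ℕ) : QI :=
  ⟨r.1 / n, div_nonneg r.2.1 (Nat.cast_nonneg n), by
    rcases Nat.eq_zero_or_pos n with h | h
    · simp [h]
    · exact le_trans (div_le_self r.2.1 (by exact_mod_cast h)) r.2.2⟩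

/-- `1/n` as an element of `[0,1] ∩ ℚ` (with `1/0 = 0`). -/
def oneOver (n : ℕ) : QI := div one n

/-- Join (maximum) in `[0,1] ∩ ℚ`. -/
def sup (r s : QI) : QI :=
  ⟨max r.1 s.1, le_max_of_le_left r.2.1, max_le r.2.2 s.2.2⟩

/-- Meet (minimum) in `[0,1] ∩ ℚ`. -/
def inf (r s : QI) : QI :=
  ⟨min r.1 s.1, le_min r.2.1 s.2.1, min_le_of_left_le r.2.2⟩

end QI

/-- A DMV-algebra: an MV-algebra with division operators `δ_n` (`n ≥ 1`) satisfying
`n·δ_n x = x` and `δ_n x ⊙ (n-1)·δ_n x = 0`. -/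
class DMVAlgebra (A : Type) extends MVAlgebra A where
  delta : ℕ → A → A
  delta_nmul : ∀ n : ℕ, 1 ≤ n → ∀ x : A, MVAlgebra.nmul n (delta n x) = x
  delta_odot : ∀ n : ℕ, 1 ≤ n → ∀ x : A,
    MVAlgebra.odot (delta n x) (MVAlgebra.nmul (n - 1) (delta n x)) = MVAlgebra.zero

/-- Homomorphism of MV-algebras: preserves `⊕`, `*` and `0`. -/
def IsMVHom {A B : Type} [MVAlgebra A] [MVAlgebra B] (f : A → B) : Prop :=
  (∀ x y : A, f (MVAlgebra.oplus x y) = MVAlgebra.oplus (f x) (f y)) ∧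
  (∀ x : A, f (MVAlgebra.star x) = MVAlgebra.star (f x)) ∧
  f MVAlgebra.zero = MVAlgebra.zero

/-- Homomorphism of DMV-algebras: an MV-homomorphism preserving every `δ_n`. -/
def IsDMVHom {A B : Type} [DMVAlgebra A] [DMVAlgebra B] (f : A → B) : Prop :=
  IsMVHom f ∧ ∀ n : ℕ, 1 ≤ n → ∀ x : A, f (DMVAlgebra.delta n x) = DMVAlgebra.delta n (f x)

/-- Ideal of an MV-algebra: contains `0`, downward closed, closed under `⊕`. -/
def IsMVIdeal {A : Type} [MVAlgebra A] (I : Set A) : Prop :=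
  MVAlgebra.zero ∈ I ∧ (∀ x ∈ I, ∀ y : A, MVAlgebra.le y x → y ∈ I) ∧
  ∀ x ∈ I, ∀ y ∈ I, MVAlgebra.oplus x y ∈ I

/-- Maximal ideal: a proper ideal maximal under inclusion. -/
def IsMaximalMVIdeal {A : Type} [MVAlgebra A] (I : Set A) : Prop :=
  IsMVIdeal I ∧ I ≠ Set.univ ∧
  ∀ J : Set A, IsMVIdeal J → J ≠ Set.univ → I ⊆ J → J = I

/-- Semisimplicity: the intersection of all maximal ideals is `{0}`. -/
def IsSemisimple (A : Type) [MVAlgebra A] : Prop :=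
  ∀ x : A, (∀ I : Set A, IsMaximalMVIdeal I → x ∈ I) → x = MVAlgebra.zero

/-- Bimorphism `[0,1]_ℚ × A → C`: preserves `∨`, `∧` and the partial sum `+`
in each argument separately. -/
def IsQBimorphism {A C : Type} [MVAlgebra A] [MVAlgebra C] (β : QI → A → C) : Prop :=
  (∀ (r s : QI) (a : A), β (QI.sup r s) a = MVAlgebra.sup (β r a) (β s a)) ∧
  (∀ (r s : QI) (a : A), β (QI.inf r s) a = MVAlgebra.inf (β r a) (β s a)) ∧
  (∀ (r s : QI) (a : A), QI.odot r s = QI.zero →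
    MVAlgebra.odot (β r a) (β s a) = MVAlgebra.zero ∧
      β (QI.oplus r s) a = MVAlgebra.oplus (β r a) (β s a)) ∧
  (∀ (r : QI) (a b : A), β r (MVAlgebra.sup a b) = MVAlgebra.sup (β r a) (β r b)) ∧
  (∀ (r : QI) (a b : A), β r (MVAlgebra.inf a b) = MVAlgebra.inf (β r a) (β r b)) ∧
  (∀ (r : QI) (a b : A), MVAlgebra.odot a b = MVAlgebra.zero →
    MVAlgebra.odot (β r a) (β r b) = MVAlgebra.zero ∧
      β r (MVAlgebra.oplus a b) = MVAlgebra.oplus (β r a) (β r b))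

/-- `T`, together with the bimorphism `β`, is the semisimple tensor product
`[0,1]_ℚ ⊗ A`: `T` is semisimple and `β` is universal among bimorphisms into
semisimple MV-algebras. -/
def IsQTensor (A T : Type) [MVAlgebra A] [MVAlgebra T] (β : QI → A → T) : Prop :=
  IsSemisimple T ∧ IsQBimorphism β ∧
  ∀ (C : Type) [MVAlgebra C], IsSemisimple C → ∀ γ : QI → A → C, IsQBimorphism γ →
    ∃! h : T → C, IsMVHom h ∧ ∀ (r : QI) (a : A), h (β r a) = γ r a

/-- The DMV-structure of `T` is the canonical one of `[0,1]_ℚ ⊗ A`: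
`δ_n (t ⊗ a) = (t/n) ⊗ a`. -/
def DeltaCompat {A T : Type} [MVAlgebra A] [DMVAlgebra T] (β : QI → A → T) : Prop :=
  ∀ n : ℕ, 1 ≤ n → ∀ (t : QI) (a : A),
    DMVAlgebra.delta n (β t a) = β (QI.div t n) a

/-!
A DMV-algebra `V` is an MV-module over `[0,1]_ℚ` via `(p/q)·x = p δ_q x`, and for an
MV-homomorphism `f : B → V` the map `(r, b) ↦ r·f(b)` is a bimorphism; the universal property of
`[0,1]_ℚ ⊗ B` turns it into an MV-homomorphism `f̃` with `f̃(r ⊗ b) = r·f(b)`. Every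
MV-homomorphism between DMV-algebras preserves `δ_n`, since `δ_n x` is the only `y` with `n y = x`
and `y ⊙ (n-1) y = 0`. Conversely `r ⊗ b = p δ_q (1 ⊗ b)`, so a DMV-homomorphism is determined by
its values on `1 ⊗ b`, which gives uniqueness.

The algebra behind this reads `x ⊙ y = 0` as "`x ⊕ y` is not truncated". Such sums can be
regrouped as in a partial commutative monoid, and with `w = y ∧ z` the decompositions
`y = w ⊕ (y ⊙ z*)`, `z = w ⊕ (z ⊙ y*)` have disjoint remainders. Together these give
`n (y ⊙ z*) = n y ⊙ (n z)*` when `y ⊙ (n-1) y = 0`, from which the uniqueness of `δ_n` and the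
compatibility of `δ_n` and `p ·` with `∨`, `∧` and non-truncated sums follow.
-/

namespace MVAlgebra

variable {A : Type} [MVAlgebra A]

local prefix:max "∼" => MVAlgebra.star
local infixl:70 " ⊙ " => MVAlgebra.odot

-- The truncated sum `⊕` is written `+`, so that `nmul n x` becomes `n • x`.
instance toAddCommMonoid : AddCommMonoid A where
  add := oplus
  zero := zero
  add_assoc := oplus_assoc
  zero_add x := (oplus_comm _ _).trans (oplus_zero x)
  add_zero := oplus_zero
  add_comm := oplus_comm
  nsmul := nmul
  nsmul_zero _ := rfl
  nsmul_succ _ _ := rfl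

theorem oplus_eq_add (x y : A) : oplus x y = x + y := rfl

theorem zero_eq : (zero : A) = 0 := rfl

theorem one_add (x : A) : one + x = one := oplus_star_zero x

theorem add_one (x : A) : x + one = one := (add_comm _ _).trans (one_add x)

theorem star_zero : ∼(0 : A) = one := rfl

theorem star_one : ∼(one : A) = 0 := star_star _

theorem star_add_self (x : A) : ∼x + x = one := by
  have h := lukasiewicz x one
  simp only [oplus_eq_add, add_one, star_one, zero_add] at h
  exact h.symm

theorem odot_def (x y : A) : x ⊙ y = ∼(∼x + ∼y) := rfl

theorem star_add (x y : A) : ∼(x + y) = ∼x ⊙ ∼y := by rw [odot_def, star_star, star_star]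

theorem odot_comm (x y : A) : x ⊙ y = y ⊙ x := by rw [odot_def, odot_def, add_comm]

theorem odot_assoc (x y z : A) : x ⊙ y ⊙ z = x ⊙ (y ⊙ z) := by
  simp only [odot_def, star_star, add_assoc]

theorem odot_left_comm (x y z : A) : x ⊙ (y ⊙ z) = y ⊙ (x ⊙ z) := by
  rw [← odot_assoc, odot_comm x, odot_assoc]

theorem odot_zero (x : A) : x ⊙ 0 = 0 := by rw [odot_def, star_zero, add_one, star_one]

theorem zero_odot (x : A) : 0 ⊙ x = 0 := by rw [odot_comm, odot_zero]

theorem odot_star_self (x : A) : x ⊙ ∼x = 0 := by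
  rw [odot_def, star_star, star_add_self, star_one]

theorem odot_star_add_comm (x y : A) : x ⊙ ∼y + y = y ⊙ ∼x + x := by
  simpa only [odot_def, star_star, oplus_eq_add] using lukasiewicz x y

instance : LE A := ⟨MVAlgebra.le⟩

theorem le_iff_odot_star {x y : A} : x ≤ y ↔ x ⊙ ∼y = 0 := Iff.rfl

theorem le_self_add' (x u : A) : x ≤ x + u := by
  rw [le_iff_odot_star, star_add, ← odot_assoc, odot_star_self, zero_odot]

theorem add_odot_star_of_le {x y : A} (h : x ≤ y) : x + y ⊙ ∼x = y := by
  rw [add_comm, odot_star_add_comm, le_iff_odot_star.1 h, zero_add]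

instance : PartialOrder A where
  le_refl := odot_star_self
  le_trans x y z hxy hyz := by
    rw [← add_odot_star_of_le hyz, ← add_odot_star_of_le hxy, add_assoc]
    exact le_self_add' _ _
  le_antisymm x y hxy hyx := by
    have h := odot_star_add_comm x y
    rwa [le_iff_odot_star.1 hxy, le_iff_odot_star.1 hyx, zero_add, zero_add, eq_comm] at h

instance : IsOrderedAddMonoid A where
  add_le_add_left a b h c := by
    rw [← add_odot_star_of_le h, add_right_comm]
    exact le_self_add' _ _

instance : CanonicallyOrderedAdd A where
  exists_add_of_le h := ⟨_, (add_odot_star_of_le h).symm⟩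
  le_self_add := le_self_add'
  le_add_self x u := add_comm x u ▸ le_self_add' x u

theorem star_le_star {x y : A} (h : x ≤ y) : ∼y ≤ ∼x := by
  rw [le_iff_odot_star, star_star, odot_comm]
  exact h

theorem star_le_star_iff {x y : A} : ∼y ≤ ∼x ↔ x ≤ y :=
  ⟨fun h => by simpa only [star_star] using star_le_star h, star_le_star⟩

theorem odot_le_odot {a b c d : A} (h₁ : a ≤ b) (h₂ : c ≤ d) : a ⊙ c ≤ b ⊙ d :=
  star_le_star (add_le_add (star_le_star h₁) (star_le_star h₂))

theorem odot_le_left (x y : A) : x ⊙ y ≤ x := by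
  simpa only [odot_def, star_star] using star_le_star (le_self_add (a := ∼x) (b := ∼y))

theorem sup_le' {x y z : A} (hx : x ≤ z) (hy : y ≤ z) : MVAlgebra.sup x y ≤ z := by
  calc x ⊙ ∼y + y ≤ z ⊙ ∼y + y := add_le_add_left (odot_le_odot hx le_rfl) y
    _ = z := by rw [odot_star_add_comm, le_iff_odot_star.1 hy, zero_add]

theorem inf_eq_star_sup (x y : A) : MVAlgebra.inf x y = ∼(MVAlgebra.sup (∼x) (∼y)) := by
  simp only [MVAlgebra.inf, MVAlgebra.sup, odot_def, star_star, oplus_eq_add]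

instance : Lattice A where
  sup := MVAlgebra.sup
  le_sup_left x y := by
    show x ≤ x ⊙ ∼y + y
    rw [odot_star_add_comm]
    exact le_add_self
  le_sup_right _ _ := le_add_self
  sup_le _ _ _ := sup_le'
  inf := MVAlgebra.inf
  inf_le_left x y := by
    rw [inf_eq_star_sup, ← star_le_star_iff, star_star]
    show ∼x ≤ ∼x ⊙ ∼∼y + ∼y
    rw [odot_star_add_comm]
    exact le_add_self
  inf_le_right x y := by
    rw [inf_eq_star_sup, ← star_le_star_iff, star_star]
    exact le_add_self
  le_inf x y z hx hy := by
    rw [inf_eq_star_sup, ← star_le_star_iff, star_star]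
    exact sup_le' (star_le_star hx) (star_le_star hy)

theorem sup_def (x y : A) : x ⊔ y = x ⊙ ∼y + y := rfl

theorem inf_def (x y : A) : x ⊓ y = (x + ∼y) ⊙ y := rfl

theorem star_sup (x y : A) : ∼(x ⊔ y) = ∼x ⊓ ∼y := by
  rw [show ∼x ⊓ ∼y = MVAlgebra.inf (∼x) (∼y) from rfl, inf_eq_star_sup, star_star, star_star]
  rfl

theorem star_inf (x y : A) : ∼(x ⊓ y) = ∼x ⊔ ∼y := by
  rw [← star_star (∼x ⊔ ∼y), star_sup, star_star, star_star]

theorem odot_eq_zero_iff_le_star {x y : A} : x ⊙ y = 0 ↔ x ≤ ∼y := by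
  rw [le_iff_odot_star, star_star]

theorem odot_eq_zero_of_le {a b a' b' : A} (h : a ⊙ b = 0) (ha : a' ≤ a) (hb : b' ≤ b) :
    a' ⊙ b' = 0 :=
  le_antisymm (h ▸ odot_le_odot ha hb) zero_le

theorem add_odot_star (a c : A) : (a + c) ⊙ ∼c = a ⊓ ∼c := by rw [inf_def, star_star]

theorem add_odot_star_cancel {a c : A} (h : a ⊙ c = 0) : (a + c) ⊙ ∼c = a := by
  rw [add_odot_star, inf_eq_left.2 (odot_eq_zero_iff_le_star.1 h)]

theorem add_right_cancel_of_odot {a b c : A} (ha : a ⊙ c = 0) (hb : b ⊙ c = 0)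
    (h : a + c = b + c) : a = b := by
  rw [← add_odot_star_cancel ha, h, add_odot_star_cancel hb]

theorem odot_le_iff_le_star_add {x y z : A} : x ⊙ y ≤ z ↔ x ≤ ∼y + z := by
  constructor
  · intro h
    calc x ≤ x ⊔ ∼y := le_sup_left
      _ = x ⊙ y + ∼y := by rw [sup_def, star_star]
      _ ≤ ∼y + z := by rw [add_comm]; exact add_le_add_right h _
  · intro h
    calc x ⊙ y ≤ (∼y + z) ⊙ y := odot_le_odot h le_rfl
      _ = z ⊓ y := by rw [inf_def, add_comm]
      _ ≤ z := inf_le_left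

theorem gc_odot_star_add (y : A) : GaloisConnection (· ⊙ y) (∼y + ·) :=
  fun _ _ => odot_le_iff_le_star_add

theorem sup_odot (x y z : A) : (x ⊔ y) ⊙ z = x ⊙ z ⊔ y ⊙ z := (gc_odot_star_add z).l_sup

theorem odot_sup (x y z : A) : x ⊙ (y ⊔ z) = x ⊙ y ⊔ x ⊙ z := by
  simp only [odot_comm x, sup_odot]

theorem add_inf (c a b : A) : c + a ⊓ b = (c + a) ⊓ (c + b) := by
  simpa only [star_star] using (gc_odot_star_add (∼c)).u_inf (b₁ := a) (b₂ := b)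

theorem inf_add_odot_star (a b : A) : a ⊓ b + a ⊙ ∼b = a := by
  have h : a ⊙ ∼(a ⊓ b) = a ⊙ ∼b := by
    rw [star_inf, odot_sup, odot_star_self, sup_eq_right.2 zero_le]
  rw [← h, add_odot_star_of_le inf_le_left]

theorem star_odot_self (x : A) : ∼x ⊙ x = 0 := by rw [odot_comm, odot_star_self]

theorem odot_star_eq_self_of_inf_eq_zero {a b : A} (h : a ⊓ b = 0) : a ⊙ ∼b = a := by
  simpa only [h, zero_add] using inf_add_odot_star a b

theorem odot_add_eq_zero_iff {a b c : A} (hab : a ⊙ b = 0) (hbc : b ⊙ c = 0) :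
    a ⊙ (b + c) = 0 ↔ (a + b) ⊙ c = 0 := by
  simp only [odot_eq_zero_iff_le_star, star_add] at hbc ⊢
  constructor
  · intro h
    calc a + b ≤ ∼c ⊙ ∼b + b := add_le_add_left (odot_comm (∼b) _ ▸ h) b
      _ = ∼c := by rw [← sup_def, sup_eq_left.2 hbc]
  · intro h
    calc a = (a + b) ⊙ ∼b := (add_odot_star_cancel hab).symm
      _ ≤ ∼b ⊙ ∼c := (odot_le_odot h le_rfl).trans_eq (odot_comm _ _)

theorem odot_eq_zero_add_add_comm {u v s t : A} (huv : u ⊙ v = 0) (hst : s ⊙ t = 0)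
    (h : (u + v) ⊙ (s + t) = 0) : (u + s) ⊙ (v + t) = 0 := by
  have hvs : v ⊙ s = 0 := odot_eq_zero_of_le h le_add_self le_self_add
  have hvt : v ⊙ t = 0 := odot_eq_zero_of_le h le_add_self le_add_self
  have hus : u ⊙ s = 0 := odot_eq_zero_of_le h le_self_add le_self_add
  have h₁ : (u + v + s) ⊙ t = 0 :=
    (odot_add_eq_zero_iff (odot_eq_zero_of_le h le_rfl le_self_add) hst).1 h
  have h₂ : u ⊙ (s + v) = 0 := add_comm v s ▸
    (odot_add_eq_zero_iff huv hvs).2 (odot_eq_zero_of_le h le_rfl le_self_add)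
  have h₃ : (u + s) ⊙ v = 0 := (odot_add_eq_zero_iff hus (odot_comm v s ▸ hvs)).1 h₂
  exact (odot_add_eq_zero_iff h₃ hvt).2 (add_right_comm u s v ▸ h₁)

theorem inf_add_eq_zero {u v w : A} (hv : u ⊓ v = 0) (hw : u ⊓ w = 0) : u ⊓ (v + w) = 0 := by
  set p := u ⊓ (v + w)
  have hpv : p ⊓ v = 0 := le_antisymm (hv ▸ inf_le_inf_right v inf_le_left) zero_le
  have hpw : p ≤ w := calc
    p = p ⊙ ∼v := (odot_star_eq_self_of_inf_eq_zero hpv).symm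
    _ ≤ (w + v) ⊙ ∼v := odot_le_odot (add_comm v w ▸ inf_le_right) le_rfl
    _ = w ⊓ ∼v := add_odot_star w v
    _ ≤ w := inf_le_left
  exact le_antisymm (hw ▸ le_inf inf_le_left hpw) zero_le

theorem odot_star_inf_odot_star (s t : A) : s ⊙ ∼t ⊓ t ⊙ ∼s = 0 := by
  set x := s ⊙ ∼t ⊓ t ⊙ ∼s
  have hxw : x ⊙ (s ⊓ t) = 0 := by
    refine odot_eq_zero_of_le ?_ inf_le_left inf_le_right
    rw [odot_assoc, star_odot_self, odot_zero]
  have hwx : x + s ⊓ t = 0 + s ⊓ t := by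
    rw [zero_add, add_comm, add_inf, inf_add_odot_star, inf_comm s t, inf_add_odot_star,
      inf_comm]
  exact add_right_cancel_of_odot hxw (zero_odot _) hwx

theorem inf_nsmul_eq_zero {a b : A} (h : a ⊓ b = 0) (n : ℕ) : a ⊓ n • b = 0 := by
  induction n with
  | zero => exact inf_eq_right.2 zero_le
  | succ n ih => rw [succ_nsmul]; exact inf_add_eq_zero ih h

theorem nsmul_inf_nsmul_eq_zero {a b : A} (h : a ⊓ b = 0) (k l : ℕ) : k • a ⊓ l • b = 0 :=
  inf_nsmul_eq_zero (by rw [inf_comm]; exact inf_nsmul_eq_zero (inf_comm a b ▸ h) k) l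

theorem nsmul_odot_nsmul_eq_zero_of_le {y : A} {m : ℕ} (h : y ⊙ m • y = 0) {k l : ℕ}
    (hkl : k + l ≤ m + 1) : k • y ⊙ l • y = 0 := by
  have hcompl : ∀ k ≤ m + 1, k • y ⊙ (m + 1 - k) • y = 0 := by
    intro k
    induction k with
    | zero => exact fun _ => zero_odot _
    | succ k ih =>
      intro hk
      have ih' : k • y ⊙ (y + (m - k) • y) = 0 := by
        rw [← succ_nsmul', show m - k + 1 = m + 1 - k by omega]
        exact ih (by omega)
      have hyy : y ⊙ (m - k) • y = 0 :=
        odot_eq_zero_of_le h le_rfl (nsmul_le_nsmul_left zero_le (Nat.sub_le m k))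
      rw [show m + 1 - (k + 1) = m - k by omega, succ_nsmul]
      exact (odot_add_eq_zero_iff (odot_eq_zero_of_le ih' le_rfl le_self_add) hyy).1 ih'
  exact odot_eq_zero_of_le (hcompl k (by omega)) le_rfl (nsmul_le_nsmul_left zero_le (by omega))

theorem nsmul_odot_nsmul_eq_zero {a b : A} {m : ℕ} (hab : a ⊙ b = 0)
    (h : (a + b) ⊙ m • (a + b) = 0) : (m + 1) • a ⊙ (m + 1) • b = 0 := by
  suffices ∀ k ≤ m + 1, k • a ⊙ k • b = 0 from this _ le_rfl
  intro k
  induction k with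
  | zero => exact fun _ => zero_odot _
  | succ k ih =>
    intro hk
    rw [succ_nsmul, succ_nsmul]
    refine odot_eq_zero_add_add_comm (ih (by omega)) hab ?_
    rw [← nsmul_add, odot_comm]
    exact odot_eq_zero_of_le h le_rfl (nsmul_le_nsmul_left zero_le (by omega))

theorem add_odot_nsmul_eq_zero {a b : A} {m : ℕ} (ha : a ⊙ m • a = 0)
    (hb : b ⊙ m • b = 0) (h : (m + 1) • a ⊙ (m + 1) • b = 0) :
    (a + b) ⊙ m • (a + b) = 0 := by
  rw [succ_nsmul', succ_nsmul'] at h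
  rw [nsmul_add]
  exact odot_eq_zero_add_add_comm ha hb h

theorem nsmul_odot_star {x : A} {m : ℕ} (h : x ⊙ m • x = 0) {p : ℕ} (hp : p ≤ m + 1)
    (y : A) : p • (x ⊙ ∼y) = p • x ⊙ ∼(p • y) := by
  have hxy : (y ⊓ x) ⊙ (x ⊙ ∼y) = 0 :=
    odot_eq_zero_of_le (by rw [odot_left_comm, odot_star_self, odot_zero]) inf_le_left le_rfl
  have hmix : (m + 1) • (x ⊙ ∼y) ⊙ (m + 1) • (y ⊓ x) = 0 := by
    rw [odot_comm]
    refine nsmul_odot_nsmul_eq_zero hxy ?_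
    rwa [inf_comm, inf_add_odot_star]
  have hp' : p • (x ⊙ ∼y) ⊙ p • (y ⊓ x) = 0 :=
    odot_eq_zero_of_le hmix (nsmul_le_nsmul_left zero_le hp) (nsmul_le_nsmul_left zero_le hp)
  have hdisj : p • (x ⊙ ∼y) ⊓ p • (y ⊙ ∼x) = 0 :=
    nsmul_inf_nsmul_eq_zero (inf_comm (y ⊙ ∼x) _ ▸ odot_star_inf_odot_star y x) p p
  have hx : p • x = p • (y ⊓ x) + p • (x ⊙ ∼y) := by rw [← nsmul_add, inf_comm, inf_add_odot_star]
  have hy : p • y = p • (y ⊓ x) + p • (y ⊙ ∼x) := by rw [← nsmul_add, inf_add_odot_star]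
  rw [hx, hy, star_add, ← odot_assoc, add_comm (p • (y ⊓ x)), add_odot_star_cancel hp',
    odot_star_eq_self_of_inf_eq_zero hdisj]

theorem eq_of_nsmul_eq {y z : A} {m : ℕ} (hy : y ⊙ m • y = 0) (hz : z ⊙ m • z = 0)
    (h : (m + 1) • y = (m + 1) • z) : y = z := by
  have le_of_nsmul_eq {y z : A} (hy : y ⊙ m • y = 0) (h : (m + 1) • y = (m + 1) • z) :
      y ≤ z := by
    rw [le_iff_odot_star]
    refine le_antisymm ?_ zero_le
    calc y ⊙ ∼z ≤ (m + 1) • (y ⊙ ∼z) := by rw [succ_nsmul]; exact le_add_self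
      _ = 0 := by rw [nsmul_odot_star hy le_rfl, h, odot_star_self]
  exact le_antisymm (le_of_nsmul_eq hy h) (le_of_nsmul_eq hz h.symm)

theorem nsmul_sup {x : A} {m : ℕ} (h : x ⊙ m • x = 0) {p : ℕ} (hp : p ≤ m + 1) (y : A) :
    p • (y ⊔ x) = p • y ⊔ p • x := by
  rw [sup_comm, sup_def, nsmul_add, nsmul_odot_star h hp, ← sup_def, sup_comm]

theorem nsmul_inf (p : ℕ) (x y : A) : p • (x ⊓ y) = p • x ⊓ p • y := by
  have hx : p • x = p • (x ⊓ y) + p • (x ⊙ ∼y) := by rw [← nsmul_add, inf_add_odot_star]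
  have hy : p • y = p • (x ⊓ y) + p • (y ⊙ ∼x) := by rw [← nsmul_add, inf_comm, inf_add_odot_star]
  rw [hx, hy, ← add_inf, nsmul_inf_nsmul_eq_zero (odot_star_inf_odot_star x y), add_zero]

theorem sup_odot_nsmul_eq_zero {x y : A} {m : ℕ} (hx : x ⊙ m • x = 0) (hy : y ⊙ m • y = 0) :
    (x ⊔ y) ⊙ m • (x ⊔ y) = 0 := by
  rw [sup_def]
  refine add_odot_nsmul_eq_zero
    (odot_eq_zero_of_le hx (odot_le_left _ _) (nsmul_le_nsmul_right (odot_le_left _ _) m)) hy ?_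
  rw [nsmul_odot_star hx le_rfl, odot_assoc, star_odot_self, odot_zero]

end MVAlgebra

namespace IsMVHom

open MVAlgebra

local prefix:max "∼" => MVAlgebra.star
local infixl:70 " ⊙ " => MVAlgebra.odot

variable {A B : Type} [MVAlgebra A] [MVAlgebra B] {f : A → B}

theorem map_add (hf : IsMVHom f) (x y : A) : f (x + y) = f x + f y := hf.1 x y

theorem map_zero (hf : IsMVHom f) : f 0 = 0 := hf.2.2

theorem map_nsmul (hf : IsMVHom f) (n : ℕ) (x : A) : f (n • x) = n • f x := by
  induction n with
  | zero => exact hf.map_zero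
  | succ n ih => rw [succ_nsmul, succ_nsmul, hf.map_add, ih]

theorem map_odot (hf : IsMVHom f) (x y : A) : f (x ⊙ y) = f x ⊙ f y := by
  rw [odot_def, odot_def, hf.2.1, hf.map_add, hf.2.1, hf.2.1]

theorem map_sup (hf : IsMVHom f) (x y : A) : f (x ⊔ y) = f x ⊔ f y := by
  rw [sup_def, sup_def, hf.map_add, hf.map_odot, hf.2.1]

theorem map_inf (hf : IsMVHom f) (x y : A) : f (x ⊓ y) = f x ⊓ f y := by
  rw [inf_def, inf_def, hf.map_odot, hf.map_add, hf.2.1]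

end IsMVHom

namespace DMVAlgebra

open MVAlgebra

local infixl:70 " ⊙ " => MVAlgebra.odot

variable {V : Type} [DMVAlgebra V]

theorem nsmul_delta {n : ℕ} (hn : 0 < n) (x : V) : n • delta n x = x := delta_nmul n hn x

theorem delta_odot_nsmul {n : ℕ} (hn : 0 < n) (x : V) :
    delta n x ⊙ (n - 1) • delta n x = 0 :=
  delta_odot n hn x

theorem eq_delta {n : ℕ} (hn : 0 < n) {x y : V} (h : n • y = x)
    (hy : y ⊙ (n - 1) • y = 0) : y = delta n x := by
  obtain ⟨m, rfl⟩ := Nat.exists_eq_add_one_of_ne_zero hn.ne'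
  exact eq_of_nsmul_eq (m := m) hy (delta_odot_nsmul hn x) (by rw [h, nsmul_delta hn])

theorem delta_one (x : V) : delta 1 x = x := by
  simpa only [one_nsmul] using nsmul_delta one_pos x

theorem nsmul_delta_mul {q k : ℕ} (hq : 0 < q) (hk : 0 < k) (x : V) :
    k • delta (q * k) x = delta q x := by
  have hqk : 0 < q * k := Nat.mul_pos hq hk
  refine eq_delta hq (by rw [← mul_nsmul', nsmul_delta hqk]) ?_
  rw [← mul_nsmul]
  exact nsmul_odot_nsmul_eq_zero_of_le (delta_odot_nsmul hqk x) <| by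
    obtain ⟨q, rfl⟩ := Nat.exists_eq_add_one_of_ne_zero hq.ne'
    rw [Nat.sub_add_cancel hqk, Nat.add_sub_cancel, add_mul, one_mul, add_comm, mul_comm]

theorem nsmul_delta_eq_of_mul_eq {p q p' q' : ℕ} (hq : 0 < q) (hq' : 0 < q')
    (h : p * q' = p' * q) (x : V) : p • delta q x = p' • delta q' x := by
  rw [← nsmul_delta_mul hq hq' x, ← nsmul_delta_mul hq' hq x, ← mul_nsmul', ← mul_nsmul', h,
    mul_comm q' q]

theorem delta_sup {n : ℕ} (hn : 0 < n) (x y : V) :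
    delta n (x ⊔ y) = delta n x ⊔ delta n y := by
  obtain ⟨m, rfl⟩ := Nat.exists_eq_add_one_of_ne_zero hn.ne'
  refine (eq_delta hn ?_ (sup_odot_nsmul_eq_zero (delta_odot_nsmul hn x)
    (delta_odot_nsmul hn y))).symm
  rw [nsmul_sup (m := m) (delta_odot_nsmul hn y) le_rfl, nsmul_delta hn, nsmul_delta hn]

theorem delta_inf {n : ℕ} (hn : 0 < n) (x y : V) :
    delta n (x ⊓ y) = delta n x ⊓ delta n y := by
  refine (eq_delta hn ?_ (odot_eq_zero_of_le (delta_odot_nsmul hn x) inf_le_left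
    (nsmul_le_nsmul_right inf_le_left _))).symm
  rw [nsmul_inf, nsmul_delta hn, nsmul_delta hn]

theorem delta_add {n : ℕ} (hn : 0 < n) {x y : V} (h : x ⊙ y = 0) :
    delta n (x + y) = delta n x + delta n y := by
  obtain ⟨m, rfl⟩ := Nat.exists_eq_add_one_of_ne_zero hn.ne'
  refine (eq_delta hn (by rw [nsmul_add, nsmul_delta hn, nsmul_delta hn]) ?_).symm
  refine add_odot_nsmul_eq_zero (m := m) (delta_odot_nsmul hn x) (delta_odot_nsmul hn y) ?_
  rwa [nsmul_delta hn, nsmul_delta hn]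

end DMVAlgebra

theorem IsMVHom.map_delta {V W : Type} [DMVAlgebra V] [DMVAlgebra W] {g : V → W}
    (hg : IsMVHom g) {n : ℕ} (hn : 0 < n) (x : V) :
    g (DMVAlgebra.delta n x) = DMVAlgebra.delta n (g x) :=
  DMVAlgebra.eq_delta hn (by rw [← hg.map_nsmul, DMVAlgebra.nsmul_delta hn])
    (by rw [← hg.map_nsmul, ← hg.map_odot, DMVAlgebra.delta_odot_nsmul hn, hg.map_zero])

namespace QI

theorem odot_eq_zero_iff {r s : QI} : QI.odot r s = QI.zero ↔ r.1 + s.1 ≤ 1 := by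
  refine Subtype.ext_iff.trans ?_
  show (1 : ℚ) - min ((1 - r.1) + (1 - s.1)) 1 = 0 ↔ _
  rcases le_total ((1 - r.1) + (1 - s.1)) 1 with h | h
  · rw [min_eq_left h]; constructor <;> intro <;> linarith
  · rw [min_eq_right h]; constructor <;> intro <;> linarith

theorem oplus_val_of_add_le_one {r s : QI} (h : r.1 + s.1 ≤ 1) : (QI.oplus r s).1 = r.1 + s.1 :=
  min_eq_left h

theorem num_toNat_cast (r : QI) : (r.1.num.toNat : ℚ) = r.1.num := by
  exact_mod_cast Int.toNat_of_nonneg (Rat.num_nonneg.2 r.2.1)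

theorem num_toNat_div_den (r : QI) : (r.1.num.toNat : ℚ) / r.1.den = r.1 := by
  rw [num_toNat_cast, Rat.num_div_den]

theorem num_toNat_mul_eq_of_div_eq {r : QI} {p q : ℕ} (hq : 0 < q) (h : (p : ℚ) / q = r.1) :
    r.1.num.toNat * q = p * r.1.den := by
  rw [← num_toNat_div_den r, div_eq_div_iff (by positivity) (by positivity)] at h
  exact_mod_cast h.symm

theorem num_toNat_le_den (r : QI) : r.1.num.toNat ≤ r.1.den := by
  have h := r.2.2
  rw [← num_toNat_div_den r, div_le_one (by exact_mod_cast r.1.den_pos)] at h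
  exact_mod_cast h

theorem exists_common_den (r s : QI) :
    ∃ p p' q : ℕ, 0 < q ∧ (p : ℚ) / q = r.1 ∧ (p' : ℚ) / q = s.1 := by
  have hr : (r.1.den : ℚ) ≠ 0 := by exact_mod_cast r.1.den_pos.ne'
  have hs : (s.1.den : ℚ) ≠ 0 := by exact_mod_cast s.1.den_pos.ne'
  refine ⟨r.1.num.toNat * s.1.den, s.1.num.toNat * r.1.den, r.1.den * s.1.den,
    Nat.mul_pos r.1.den_pos s.1.den_pos, ?_, ?_⟩
  · push_cast
    rw [mul_div_mul_right _ _ hs, num_toNat_div_den]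
  · push_cast
    rw [mul_comm (r.1.den : ℚ), mul_div_mul_right _ _ hr, num_toNat_div_den]

end QI

namespace DMVAlgebra

open MVAlgebra

local infixl:70 " ⊙ " => MVAlgebra.odot

variable {V : Type} [DMVAlgebra V]

/-- The action of `[0,1]_ℚ` that makes a DMV-algebra an MV-module: `(p / q) • x = p δ_q x`. -/
def qsmul (r : QI) (x : V) : V := r.1.num.toNat • delta r.1.den x

theorem qsmul_eq {r : QI} {p q : ℕ} (hq : 0 < q) (h : (p : ℚ) / q = r.1) (x : V) :
    qsmul r x = p • delta q x :=
  nsmul_delta_eq_of_mul_eq r.1.den_pos hq (QI.num_toNat_mul_eq_of_div_eq hq h) x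

theorem qsmul_one (x : V) : qsmul QI.one x = x := by
  rw [qsmul_eq one_pos (p := 1) (by norm_num; rfl), one_nsmul, delta_one]

theorem qsmul_le_self (r : QI) (x : V) : qsmul r x ≤ x :=
  calc qsmul r x ≤ r.1.den • delta r.1.den x :=
        nsmul_le_nsmul_left zero_le (QI.num_toNat_le_den r)
    _ = x := nsmul_delta r.1.den_pos x

theorem qsmul_mono_left {r s : QI} (h : r.1 ≤ s.1) (x : V) : qsmul r x ≤ qsmul s x := by
  obtain ⟨p, p', q, hq, hr, hs⟩ := QI.exists_common_den r s
  rw [qsmul_eq hq hr, qsmul_eq hq hs]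
  refine nsmul_le_nsmul_left zero_le ?_
  rw [← hr, ← hs, div_le_div_iff_of_pos_right (by exact_mod_cast hq)] at h
  exact_mod_cast h

theorem qsmul_add_left {r s : QI} (h : r.1 + s.1 ≤ 1) (x : V) :
    qsmul r x ⊙ qsmul s x = 0 ∧ qsmul (QI.oplus r s) x = qsmul r x + qsmul s x := by
  obtain ⟨p, p', q, hq, hr, hs⟩ := QI.exists_common_den r s
  have hsum : ((p + p' : ℕ) : ℚ) / q = (QI.oplus r s).1 := by
    rw [QI.oplus_val_of_add_le_one h, ← hr, ← hs, Nat.cast_add, add_div]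
  have hle : p + p' ≤ q := by
    rw [← hr, ← hs, ← add_div, div_le_one (by exact_mod_cast hq)] at h
    exact_mod_cast h
  rw [qsmul_eq hq hr, qsmul_eq hq hs, qsmul_eq hq hsum, add_nsmul]
  exact ⟨nsmul_odot_nsmul_eq_zero_of_le (delta_odot_nsmul hq x) (by omega), rfl⟩

theorem qsmul_sup (r : QI) (x y : V) : qsmul r (x ⊔ y) = qsmul r x ⊔ qsmul r y := by
  have hr := r.1.den_pos
  rw [qsmul, delta_sup hr, nsmul_sup (delta_odot_nsmul hr y)
    (by have := QI.num_toNat_le_den r; omega)]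
  rfl

theorem qsmul_inf (r : QI) (x y : V) : qsmul r (x ⊓ y) = qsmul r x ⊓ qsmul r y := by
  rw [qsmul, delta_inf r.1.den_pos, nsmul_inf]
  rfl

theorem qsmul_add_right (r : QI) {x y : V} (h : x ⊙ y = 0) :
    qsmul r x ⊙ qsmul r y = 0 ∧ qsmul r (x + y) = qsmul r x + qsmul r y := by
  refine ⟨odot_eq_zero_of_le h (qsmul_le_self r x) (qsmul_le_self r y), ?_⟩
  rw [qsmul, delta_add r.1.den_pos h, nsmul_add]
  rfl

theorem isQBimorphism_qsmul : IsQBimorphism (qsmul : QI → V → V) := by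
  refine ⟨fun r s x => ?_, fun r s x => ?_,
    fun r s x h => qsmul_add_left (QI.odot_eq_zero_iff.1 h) x, qsmul_sup, qsmul_inf,
    fun r x y => qsmul_add_right r⟩
  · rcases le_total r.1 s.1 with h | h
    · rw [show QI.sup r s = s from Subtype.ext (max_eq_right h)]
      exact (sup_eq_right.2 (qsmul_mono_left h x)).symm
    · rw [show QI.sup r s = r from Subtype.ext (max_eq_left h)]
      exact (sup_eq_left.2 (qsmul_mono_left h x)).symm
  · rcases le_total r.1 s.1 with h | h
    · rw [show QI.inf r s = r from Subtype.ext (min_eq_left h)]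
      exact (inf_eq_left.2 (qsmul_mono_left h x)).symm
    · rw [show QI.inf r s = s from Subtype.ext (min_eq_right h)]
      exact (inf_eq_right.2 (qsmul_mono_left h x)).symm

end DMVAlgebra

theorem IsMVHom.map_qsmul {V W : Type} [DMVAlgebra V] [DMVAlgebra W] {g : V → W}
    (hg : IsMVHom g) (r : QI) (x : V) : g (DMVAlgebra.qsmul r x) = DMVAlgebra.qsmul r (g x) := by
  rw [DMVAlgebra.qsmul, hg.map_nsmul, hg.map_delta r.1.den_pos, DMVAlgebra.qsmul]

namespace IsQBimorphism

open MVAlgebra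

variable {A C : Type} [MVAlgebra A] [MVAlgebra C] {β : QI → A → C}

theorem comp_right {B : Type} [MVAlgebra B] (hβ : IsQBimorphism β) {f : B → A}
    (hf : IsMVHom f) : IsQBimorphism (fun r b => β r (f b)) := by
  obtain ⟨hsup, hinf, hadd, hsup', hinf', hadd'⟩ := hβ
  refine ⟨fun r s b => hsup r s (f b), fun r s b => hinf r s (f b),
    fun r s b => hadd r s (f b), fun r a b => ?_, fun r a b => ?_, fun r a b h => ?_⟩
  · exact (congrArg (β r) (hf.map_sup a b)).trans (hsup' r (f a) (f b))
  · exact (congrArg (β r) (hf.map_inf a b)).trans (hinf' r (f a) (f b))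
  · have hf₀ : MVAlgebra.odot (f a) (f b) = 0 := by rw [← hf.map_odot, h, zero_eq, hf.map_zero]
    exact ⟨(hadd' r _ _ hf₀).1, (congrArg (β r) (hf.map_add a b)).trans (hadd' r _ _ hf₀).2⟩

theorem apply_zero (hβ : IsQBimorphism β) (a : A) : β QI.zero a = 0 := by
  have h₀ : QI.odot QI.zero QI.zero = QI.zero := QI.odot_eq_zero_iff.2 (by norm_num [QI.zero])
  obtain ⟨hperp, hsum⟩ := hβ.2.2.1 QI.zero QI.zero a h₀
  rw [show QI.oplus QI.zero QI.zero = QI.zero from Subtype.ext (by norm_num [QI.oplus, QI.zero])]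
    at hsum
  exact add_right_cancel_of_odot hperp (zero_odot _) (by rw [zero_add]; exact hsum.symm)

theorem apply_eq_nsmul (hβ : IsQBimorphism β) (a : A) {q : ℕ} (hq : 0 < q) :
    ∀ k ≤ q, ∀ r : QI, r.1 = k / q → β r a = k • β (QI.div QI.one q) a := by
  have hq' : (0 : ℚ) < q := by exact_mod_cast hq
  intro k
  induction k with
  | zero =>
    intro _ r hr
    rw [show r = QI.zero from Subtype.ext (by simpa using hr : r.1 = 0), hβ.apply_zero, zero_nsmul]
  | succ k ih =>
    intro hk r hr
    have hkq : (k : ℚ) / q + 1 / q ≤ 1 := by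
      rw [← add_div, div_le_one hq']; exact_mod_cast hk
    let r' : QI := ⟨k / q, by positivity, by linarith [show (0 : ℚ) ≤ 1 / q by positivity]⟩
    have hr' : QI.oplus r' (QI.div QI.one q) = r := by
      refine Subtype.ext ((QI.oplus_val_of_add_le_one hkq).trans ?_)
      rw [hr]
      show (k : ℚ) / q + 1 / q = ((k + 1 : ℕ) : ℚ) / q
      rw [← add_div, Nat.cast_succ]
    rw [← hr', ((hβ.2.2.1 r' _ a) (QI.odot_eq_zero_iff.2 hkq)).2, ih (by omega) r' rfl, succ_nsmul]
    rfl

theorem apply_eq_qsmul {T : Type} [DMVAlgebra T] {β : QI → A → T} (hβ : IsQBimorphism β)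
    (hδ : DeltaCompat β) (r : QI) (a : A) : β r a = DMVAlgebra.qsmul r (β QI.one a) := by
  rw [hβ.apply_eq_nsmul a r.1.den_pos _ (QI.num_toNat_le_den r) r (QI.num_toNat_div_den r).symm,
    ← hδ _ r.1.den_pos]
  rfl

end IsQBimorphism

theorem universal_property_qtensor_general (B : Type) [MVAlgebra B]
    (T : Type) [DMVAlgebra T] (β : QI → B → T)
    (hT : IsQTensor B T β) (hδ : DeltaCompat β)
    (V : Type) [DMVAlgebra V] (hV : IsSemisimple V)
    (f : B → V) (hf : IsMVHom f) :
    ∃! g : T → V, IsDMVHom g ∧ ∀ b : B, g (β QI.one b) = f b := by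
  obtain ⟨-, hβ, huniv⟩ := hT
  obtain ⟨g, ⟨hg, hgβ⟩, huniq⟩ :=
    huniv V hV _ (DMVAlgebra.isQBimorphism_qsmul.comp_right hf)
  refine ⟨g, ⟨⟨hg, fun n hn => hg.map_delta hn⟩, fun b => ?_⟩, ?_⟩
  · rw [hgβ, DMVAlgebra.qsmul_one]
  · rintro g' ⟨⟨hg', -⟩, hg'β⟩
    refine huniq g' ⟨hg', fun r b => ?_⟩
    rw [hβ.apply_eq_qsmul hδ, hg'.map_qsmul, hg'β]

/-- Let `B` be a semisimple MV-algebra and let `T` (a DMV-algebra),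
with bimorphism `β`, be the semisimple tensor product `[0,1]_ℚ ⊗ B` (its DMV-structure
being the canonical one). For every semisimple DMV-algebra `V` and every MV-homomorphism
`f : B → U_δ(V)`, there is a unique DMV-homomorphism `f̃ : [0,1]_ℚ ⊗ B → V` with
`f̃ ∘ ι_B = f`, where `ι_B b = 1 ⊗ b`. -/
theorem universal_property_qtensor (B : Type) [MVAlgebra B] (hB : IsSemisimple B)
    (T : Type) [DMVAlgebra T] (β : QI → B → T)
    (hT : IsQTensor B T β) (hδ : DeltaCompat β)
    (V : Type) [DMVAlgebra V] (hV : IsSemisimple V)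
    (f : B → V) (hf : IsMVHom f) :
    ∃! g : T → V, IsDMVHom g ∧ ∀ b : B, g (β QI.one b) = f b :=
  universal_property_qtensor_general B T β hT hδ V hV f hf
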